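/- Let n ≥ 2 be a fixed integer and let K, y, q be positive integers with q ≥ 2 and y ≥ 2, and let α be a real number with |α − a/q| ≤ 1/q², gcd(a, q) = 1. Set W₄ = Σ_{h ≤ (n−1)! K y^{n−1}} τ_n(h) · min( y, 1/(2‖α h‖) ), where the sum runs over positive integers h. Then there exists a constant C depending only on n such that W₄² ≤ C · K² y^{2n} · ( 1/q + 1/(K y^{n−1}) + 1/y + q/(K yⁿ) ) · (ln(K y^{n}))^{n²}. -/

import Mathlib

/-!
By Cauchy–Schwarz, `W₄² ≤ (∑ τ_n(h)²) · y · ∑ min(y, 1/(2‖αh‖))`.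

For the divisor part, `τ_n(h)² ≤ τ_{n²}(h)`: two factorizations `d`, `e` of `h` are encoded by
the `n × n` matrix of multiplicative mixed second differences of `G(i, j) = gcd(d₁⋯dᵢ, e₁⋯eⱼ)`,
whose rows multiply to `d` and whose columns multiply to `e`. Then
`∑_{h ≤ X} τ_{k+1}(h) ≤ X (1 + log X)^k` by splitting off the first factor and summing the
harmonic series.

For the other sum, cut `[1, X]` into blocks of `q` consecutive integers. On a block starting at
`m`, `h ↦ a h - q·round(αh)` is injective (as `gcd(a, q) = 1`) and lies within `q‖αh‖ + 1` of the
fixed real `(a - qα) m` (as `|α - a/q| ≤ 1/q²`). Hence at most two `h` in a block have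
`‖αh‖ ≈ k/q` for each `k`, and the block contributes at most `4y + ∑_{s ≤ q} 2 min(y, q/s)`,
which is `O(y + q log(1 + y))` since `min(y, q/s) ≤ 2q/(s + q/y)`.
-/

open Finset

/-- `‖t‖`, the distance from the real number `t` to the nearest integer. -/
noncomputable def distNearestInt (t : ℝ) : ℝ := |t - (round t : ℤ)|

/-- `min(A, 1/(2‖t‖))`, interpreted as `A` when `‖t‖ = 0`. -/
noncomputable def minInv2 (A t : ℝ) : ℝ :=
  if distNearestInt t = 0 then A else min A (1 / (2 * distNearestInt t))

/-- The `n`-fold divisor function `τ_n(h)`: the number of ordered `n`-tuples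
`(d₁, …, d_n)` of positive integers with `d₁ d₂ ⋯ d_n = h`. -/
def tau (n h : ℕ) : ℕ :=
  ((Fintype.piFinset fun _ : Fin n => Finset.Icc 1 h).filter fun d => ∏ i, d i = h).card

lemma tau_eq_card_finMulAntidiag (n h : ℕ) : tau n h = #(Nat.finMulAntidiag n h) := by
  rw [tau]
  congr 1
  ext d
  simp only [mem_filter, Fintype.mem_piFinset, mem_Icc, Nat.mem_finMulAntidiag]
  constructor
  · rintro ⟨hd, hprod⟩
    refine ⟨hprod, fun h0 => ?_⟩
    obtain ⟨i, -, hi⟩ := prod_eq_zero_iff.1 (hprod.trans h0)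
    have := (hd i).1
    omega
  · rintro ⟨hprod, h0⟩
    have hdvd : ∀ i, d i ∣ h := fun i => hprod ▸ dvd_prod_of_mem d (mem_univ i)
    exact ⟨fun i => ⟨Nat.pos_of_dvd_of_pos (hdvd i) (Nat.pos_of_ne_zero h0),
      Nat.le_of_dvd (Nat.pos_of_ne_zero h0) (hdvd i)⟩, hprod⟩

lemma gcd_mul_gcd_dvd_gcd_mul_gcd {a A b B : ℕ} (hA : A ≠ 0) (hB : B ≠ 0) (ha : a ∣ A)
    (hb : b ∣ B) : Nat.gcd a B * Nat.gcd A b ∣ Nat.gcd A B * Nat.gcd a b := by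
  have ha0 : a ≠ 0 := ne_zero_of_dvd_ne_zero hA ha
  have hb0 : b ≠ 0 := ne_zero_of_dvd_ne_zero hB hb
  rw [← Nat.factorization_le_iff_dvd (by positivity) (by positivity),
    Nat.factorization_mul (Nat.gcd_ne_zero_left ha0) (Nat.gcd_ne_zero_left hA),
    Nat.factorization_mul (Nat.gcd_ne_zero_left hA) (Nat.gcd_ne_zero_left ha0),
    Nat.factorization_gcd ha0 hB, Nat.factorization_gcd hA hb0,
    Nat.factorization_gcd hA hB, Nat.factorization_gcd ha0 hb0]
  intro p
  have hap := (Nat.factorization_le_iff_dvd ha0 hA).2 ha p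
  have hbp := (Nat.factorization_le_iff_dvd hb0 hB).2 hb p
  simp only [Finsupp.add_apply, Finsupp.inf_apply]
  omega

section PartialProd

variable {M : Type*} [CommMonoid M] {n : ℕ}

lemma Fin.partialProd_last (f : Fin n → M) : Fin.partialProd f (Fin.last n) = ∏ i, f i := by
  rw [Fin.partialProd, Fin.val_last, List.take_of_length_le (by simp), List.prod_ofFn]

lemma Fin.partialProd_dvd_prod (f : Fin n → M) (i : Fin (n + 1)) :
    Fin.partialProd f i ∣ ∏ j, f j :=
  ⟨((List.ofFn f).drop i).prod, by
    rw [Fin.partialProd, List.prod_take_mul_prod_drop, List.prod_ofFn]⟩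

end PartialProd

section GcdMatrix

open Fin (partialProd)

variable {m n : ℕ}

def gcdMatrix (d : Fin m → ℕ) (e : Fin n → ℕ) (i : Fin m) (j : Fin n) : ℕ :=
  Nat.gcd (partialProd d i.succ) (partialProd e j.succ) *
      Nat.gcd (partialProd d i.castSucc) (partialProd e j.castSucc) /
    (Nat.gcd (partialProd d i.castSucc) (partialProd e j.succ) *
      Nat.gcd (partialProd d i.succ) (partialProd e j.castSucc))

lemma gcdMatrix_comm (d : Fin m → ℕ) (e : Fin n → ℕ) (i : Fin m) (j : Fin n) :
    gcdMatrix d e i j = gcdMatrix e d j i := by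
  simp only [gcdMatrix, Nat.gcd_comm (partialProd e _)]
  congr 1
  ring

lemma gcdMatrix_mul {d : Fin m → ℕ} {e : Fin n → ℕ} (hd : ∏ k, d k ≠ 0) (he : ∏ k, e k ≠ 0)
    (i : Fin m) (j : Fin n) :
    gcdMatrix d e i j * (Nat.gcd (partialProd d i.castSucc) (partialProd e j.succ) *
        Nat.gcd (partialProd d i.succ) (partialProd e j.castSucc)) =
      Nat.gcd (partialProd d i.succ) (partialProd e j.succ) *
        Nat.gcd (partialProd d i.castSucc) (partialProd e j.castSucc) :=
  Nat.div_mul_cancel <| gcd_mul_gcd_dvd_gcd_mul_gcd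
    (ne_zero_of_dvd_ne_zero hd (Fin.partialProd_dvd_prod d _))
    (ne_zero_of_dvd_ne_zero he (Fin.partialProd_dvd_prod e _))
    ⟨d i, Fin.partialProd_succ d i⟩ ⟨e j, Fin.partialProd_succ e j⟩

lemma prod_gcd_partialProd_succ (e : Fin n → ℕ) {x : ℕ} (hx : x ∣ ∏ k, e k) :
    ∏ j : Fin n, Nat.gcd x (partialProd e j.succ) =
      (∏ j : Fin n, Nat.gcd x (partialProd e j.castSucc)) * x := by
  have h := (Fin.prod_univ_succ fun k => Nat.gcd x (partialProd e k)).symm.trans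
    (Fin.prod_univ_castSucc fun k => Nat.gcd x (partialProd e k))
  rwa [Fin.partialProd_zero, Nat.gcd_one_right, one_mul, Fin.partialProd_last,
    Nat.gcd_eq_left hx] at h

lemma prod_gcdMatrix_row {d : Fin m → ℕ} {e : Fin n → ℕ} (hde : ∏ k, d k = ∏ k, e k)
    (hd : ∏ k, d k ≠ 0) (i : Fin m) : ∏ j, gcdMatrix d e i j = d i := by
  set D := partialProd d i.castSucc
  set D' := partialProd d i.succ
  set G : ℕ → ℕ := fun x => ∏ j : Fin n, Nat.gcd x (partialProd e j.castSucc)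
  have hD : D ∣ ∏ k, e k := hde ▸ Fin.partialProd_dvd_prod d _
  have hD' : D' ∣ ∏ k, e k := hde ▸ Fin.partialProd_dvd_prod d _
  have hD0 : D ≠ 0 := ne_zero_of_dvd_ne_zero hd (Fin.partialProd_dvd_prod d _)
  have hG : ∀ x, x ≠ 0 → G x ≠ 0 := fun x hx =>
    prod_ne_zero_iff.2 fun j _ => Nat.gcd_ne_zero_left hx
  have h : ∏ j : Fin n, gcdMatrix d e i j * (Nat.gcd D (partialProd e j.succ) *
        Nat.gcd D' (partialProd e j.castSucc)) =
      ∏ j : Fin n, Nat.gcd D' (partialProd e j.succ) * Nat.gcd D (partialProd e j.castSucc) :=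
    prod_congr rfl fun j _ => gcdMatrix_mul hd (hde ▸ hd) i j
  simp only [prod_mul_distrib, prod_gcd_partialProd_succ e hD,
    prod_gcd_partialProd_succ e hD'] at h
  have hD'0 : D' ≠ 0 := ne_zero_of_dvd_ne_zero hd (Fin.partialProd_dvd_prod d _)
  refine Nat.eq_of_mul_eq_mul_right
    (Nat.pos_of_ne_zero (mul_ne_zero (mul_ne_zero (hG D hD0) hD0) (hG D' hD'0))) ?_
  calc (∏ j, gcdMatrix d e i j) * (G D * D * G D') = G D' * D' * G D := by
        rw [← h]
    _ = d i * (G D * D * G D') := by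
        rw [show D' = D * d i from Fin.partialProd_succ d i]
        ring

lemma prod_gcdMatrix_col {d : Fin m → ℕ} {e : Fin n → ℕ} (hde : ∏ k, d k = ∏ k, e k)
    (hd : ∏ k, d k ≠ 0) (j : Fin n) : ∏ i, gcdMatrix d e i j = e j := by
  simp_rw [gcdMatrix_comm d e]
  exact prod_gcdMatrix_row hde.symm (hde ▸ hd) j

end GcdMatrix

theorem tau_mul_tau_le (m n h : ℕ) : tau m h * tau n h ≤ tau (m * n) h := by
  simp only [tau_eq_card_finMulAntidiag, ← card_product]
  refine card_le_card_of_injOn (fun de p => gcdMatrix de.1 de.2 (finProdFinEquiv.symm p).1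
    (finProdFinEquiv.symm p).2) (fun ⟨d, e⟩ hde => ?_) (fun ⟨d, e⟩ hde ⟨d', e'⟩ hde' heq => ?_)
  · simp only [coe_product, Set.mem_prod, mem_coe, Nat.mem_finMulAntidiag] at hde ⊢
    obtain ⟨⟨hd, h0⟩, he, -⟩ := hde
    have hde : ∏ k, d k = ∏ k, e k := hd.trans he.symm
    refine ⟨?_, h0⟩
    rw [finProdFinEquiv.symm.prod_comp fun ij => gcdMatrix d e ij.1 ij.2, Fintype.prod_prod_type]
    simp_rw [prod_gcdMatrix_row hde (hd ▸ h0)]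
    exact hd
  · simp only [coe_product, Set.mem_prod, mem_coe, Nat.mem_finMulAntidiag] at hde hde'
    obtain ⟨⟨hd, h0⟩, he, -⟩ := hde
    obtain ⟨⟨hd', -⟩, he', -⟩ := hde'
    have hentry : ∀ i j, gcdMatrix d e i j = gcdMatrix d' e' i j := fun i j => by
      simpa using congrFun heq (finProdFinEquiv (i, j))
    refine Prod.ext (funext fun i => ?_) (funext fun j => ?_)
    · dsimp only
      rw [← prod_gcdMatrix_row (hd.trans he.symm) (hd ▸ h0) i,
        ← prod_gcdMatrix_row (hd'.trans he'.symm) (hd' ▸ h0) i]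
      simp_rw [hentry]
    · dsimp only
      rw [← prod_gcdMatrix_col (hd.trans he.symm) (hd ▸ h0) j,
        ← prod_gcdMatrix_col (hd'.trans he'.symm) (hd' ▸ h0) j]
      simp_rw [hentry]

def finMulAntidiagIcc (k X : ℕ) : Finset (Fin k → ℕ) :=
  (Icc 1 X).biUnion (Nat.finMulAntidiag k)

lemma mem_finMulAntidiagIcc {k X : ℕ} {f : Fin k → ℕ} :
    f ∈ finMulAntidiagIcc k X ↔ ∏ i, f i ∈ Icc 1 X := by
  simp only [finMulAntidiagIcc, mem_biUnion, Nat.mem_finMulAntidiag, mem_Icc]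
  constructor
  · rintro ⟨h, hh, rfl, -⟩
    exact hh
  · intro hf
    exact ⟨_, hf, rfl, by omega⟩

lemma card_finMulAntidiagIcc (k X : ℕ) :
    #(finMulAntidiagIcc k X) = ∑ h ∈ Icc 1 X, tau k h := by
  rw [finMulAntidiagIcc, card_biUnion]
  · simp_rw [tau_eq_card_finMulAntidiag]
  · intro h₁ _ h₂ _ hne
    refine disjoint_left.2 fun f hf₁ hf₂ => hne ?_
    rw [← Nat.prod_eq_of_mem_finMulAntidiag hf₁, Nat.prod_eq_of_mem_finMulAntidiag hf₂]

lemma card_finMulAntidiagIcc_succ_le (k X : ℕ) :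
    #(finMulAntidiagIcc (k + 1) X) ≤ ∑ d ∈ Icc 1 X, #(finMulAntidiagIcc k (X / d)) := by
  have hhead : ∀ f ∈ finMulAntidiagIcc (k + 1) X, f 0 ∈ Icc 1 X := by
    intro f hf
    rw [mem_finMulAntidiagIcc, mem_Icc] at hf
    have hdvd : f 0 ∣ ∏ i, f i := dvd_prod_of_mem f (mem_univ 0)
    exact mem_Icc.2 ⟨Nat.pos_of_dvd_of_pos hdvd hf.1, (Nat.le_of_dvd hf.1 hdvd).trans hf.2⟩
  rw [card_eq_sum_card_fiberwise hhead]
  gcongr with d hd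
  refine card_le_card_of_injOn Fin.tail (fun f hf => ?_) fun f hf f' hf' htail => ?_
  · simp only [coe_filter, Set.mem_ofPred_eq, mem_finMulAntidiagIcc, mem_Icc,
      Fin.prod_univ_succ] at hf
    obtain ⟨⟨hpos, hle⟩, rfl⟩ := hf
    rw [mem_coe, mem_finMulAntidiagIcc, mem_Icc, Nat.le_div_iff_mul_le (mem_Icc.1 hd).1, mul_comm]
    exact ⟨Nat.pos_of_mul_pos_left hpos, hle⟩
  · simp only [coe_filter, Set.mem_ofPred_eq] at hf hf'
    rw [← Fin.cons_self_tail f, ← Fin.cons_self_tail f', htail, hf.2, hf'.2]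

theorem card_finMulAntidiagIcc_succ_le_mul_log (k X : ℕ) :
    (#(finMulAntidiagIcc (k + 1) X) : ℝ) ≤ X * (1 + Real.log X) ^ k := by
  induction k generalizing X with
  | zero =>
    calc (#(finMulAntidiagIcc 1 X) : ℝ) ≤ ∑ d ∈ Icc 1 X, (#(finMulAntidiagIcc 0 (X / d)) : ℝ) := by
          exact_mod_cast card_finMulAntidiagIcc_succ_le 0 X
      _ ≤ ∑ d ∈ Icc 1 X, (1 : ℝ) := by
          gcongr
          exact_mod_cast card_le_one_of_subsingleton _
      _ = X * (1 + Real.log X) ^ 0 := by simp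
  | succ k ih =>
    have hharmonic : ∑ d ∈ Icc 1 X, (d : ℝ)⁻¹ ≤ 1 + Real.log X := by
      simpa [harmonic_eq_sum_Icc] using harmonic_le_one_add_log X
    calc (#(finMulAntidiagIcc (k + 2) X) : ℝ)
        ≤ ∑ d ∈ Icc 1 X, (#(finMulAntidiagIcc (k + 1) (X / d)) : ℝ) := by
          exact_mod_cast card_finMulAntidiagIcc_succ_le (k + 1) X
      _ ≤ ∑ d ∈ Icc 1 X, (X : ℝ) * (1 + Real.log X) ^ k * (d : ℝ)⁻¹ := by
          gcongr with d hd
          refine (ih (X / d)).trans ?_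
          rw [mul_right_comm, ← div_eq_mul_inv]
          gcongr
          exacts [Nat.cast_div_le,
            Nat.cast_pos.2 (Nat.div_pos (mem_Icc.1 hd).2 (mem_Icc.1 hd).1), Nat.div_le_self X d]
      _ ≤ X * (1 + Real.log X) ^ k * (1 + Real.log X) := by
          rw [← mul_sum]
          gcongr
      _ = X * (1 + Real.log X) ^ (k + 1) := by ring

theorem sum_tau_succ_le (k X : ℕ) :
    ∑ h ∈ Icc 1 X, (tau (k + 1) h : ℝ) ≤ X * (1 + Real.log X) ^ k := by
  rw [← Nat.cast_sum, ← card_finMulAntidiagIcc]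
  exact card_finMulAntidiagIcc_succ_le_mul_log k X

lemma minInv2_le (A t : ℝ) : minInv2 A t ≤ A := by
  unfold minInv2
  split_ifs
  exacts [le_rfl, min_le_left _ _]

lemma minInv2_nonneg {A : ℝ} (hA : 0 ≤ A) (t : ℝ) : 0 ≤ minInv2 A t := by
  unfold minInv2
  split_ifs
  exacts [hA, le_min hA (one_div_nonneg.2 (mul_nonneg zero_le_two (abs_nonneg _)))]

lemma minInv2_le_min_inv {A t δ : ℝ} (hδ : 0 < δ) (h : δ ≤ distNearestInt t) :
    minInv2 A t ≤ min A δ⁻¹ := by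
  have hpos : 0 < distNearestInt t := hδ.trans_le h
  rw [minInv2, if_neg hpos.ne']
  gcongr
  rw [one_div, inv_le_inv₀ (by positivity) hδ]
  linarith

lemma min_le_two_mul_div_add {y q s : ℝ} (hy : 0 < y) (hq : 0 < q) (hs : 0 < s) :
    min y (q / s) ≤ 2 * q / (s + q / y) := by
  rw [le_div_iff₀ (by positivity)]
  rcases le_total y (q / s) with h | h
  · rw [min_eq_left h, mul_add, mul_div_cancel₀ _ hy.ne']
    rw [le_div_iff₀ hs] at h
    linarith
  · rw [min_eq_right h, mul_add, div_mul_cancel₀ _ hs.ne']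
    rw [div_le_iff₀ hs] at h
    have : q / s * (q / y) ≤ q := by
      rw [div_mul_div_comm, div_le_iff₀ (by positivity)]
      nlinarith
    linarith

lemma sum_range_min_div_le_log {y q : ℝ} (hy : 0 < y) (hq : 0 < q) (N : ℕ) :
    ∑ k ∈ range N, min y (q / (k + 1)) ≤ 2 * q * Real.log (1 + N * y / q) := by
  have hc : 0 < q / y := by positivity
  calc ∑ k ∈ range N, min y (q / (k + 1))
      ≤ ∑ k ∈ range N, 2 * q * (q / y + ↑(k + 1))⁻¹ := by
        gcongr with k
        refine (min_le_two_mul_div_add hy hq (by positivity)).trans_eq ?_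
        push_cast
        ring
    _ ≤ 2 * q * ∫ x in q / y..q / y + N, x⁻¹ := by
        rw [← mul_sum]
        gcongr
        exact (inv_antitoneOn_Icc_right hc).sum_le_integral
    _ = 2 * q * Real.log (1 + N * y / q) := by
        rw [integral_inv_of_pos hc (by positivity)]
        congr 2
        field_simp

lemma eq_ceil_or_eq_floor_of_natFloor_abs_sub_eq {z : ℤ} {c : ℝ} {k : ℕ}
    (h : ⌊|(z : ℝ) - c|⌋₊ = k) : z = ⌈c + k⌉ ∨ z = ⌊c - k⌋ := by
  rw [Nat.floor_eq_iff (abs_nonneg _)] at h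
  rcases le_total c z with hcz | hzc
  · rw [abs_of_nonneg (sub_nonneg.2 hcz)] at h
    exact Or.inl (Int.ceil_eq_iff.2 ⟨by linarith, by linarith⟩).symm
  · rw [abs_of_nonpos (sub_nonpos.2 hzc)] at h
    exact Or.inr (Int.floor_eq_iff.2 ⟨by linarith, by linarith⟩).symm

lemma sum_natFloor_abs_sub_le {ι : Type*} {S : Finset ι} {z : ι → ℤ} (hz : Set.InjOn z S)
    (c : ℝ) {ψ : ℕ → ℝ} (hψ : ∀ k, 0 ≤ ψ k) {N : ℕ}
    (hN : ∀ i ∈ S, ⌊|(z i : ℝ) - c|⌋₊ < N) :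
    ∑ i ∈ S, ψ ⌊|(z i : ℝ) - c|⌋₊ ≤ 2 * ∑ k ∈ range N, ψ k := by
  rw [← sum_fiberwise_of_maps_to' (fun i hi => mem_range.2 (hN i hi)), mul_sum]
  gcongr with k
  rw [sum_const, nsmul_eq_mul]
  gcongr
  · exact hψ k
  have hcard : #{i ∈ S | ⌊|(z i : ℝ) - c|⌋₊ = k} ≤ #({⌈c + k⌉, ⌊c - k⌋} : Finset ℤ) := by
    refine card_le_card_of_injOn z (fun i hi => ?_) (hz.mono fun i hi => (mem_filter.1 hi).1)
    rcases eq_ceil_or_eq_floor_of_natFloor_abs_sub_eq (mem_filter.1 hi).2 with h | h <;>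
      simp [h]
  exact_mod_cast hcard.trans card_le_two

section Diophantine

variable {α : ℝ} {a : ℤ} {q : ℕ}

lemma abs_sub_mul_round_sub_le (hq : 0 < q) (hα : |α - a / q| ≤ 1 / (q : ℝ) ^ 2)
    {m h : ℕ} (hmh : m ≤ h) (hhm : h ≤ m + q) :
    |((a * h - q * round (α * h) : ℤ) : ℝ) - (a - q * α) * m|
      ≤ q * distNearestInt (α * h) + 1 := by
  have hq' : (0 : ℝ) < q := by exact_mod_cast hq
  have hsplit : ((a * h - q * round (α * h) : ℤ) : ℝ) - (a - q * α) * m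
      = q * (α * h - round (α * h)) - q * (α - a / q) * (h - m) := by
    push_cast
    field_simp
    ring
  have hhm' : (h : ℝ) - m ≤ q := by
    have : (h : ℝ) ≤ m + q := by exact_mod_cast hhm
    linarith
  have hmh' : (0 : ℝ) ≤ h - m := sub_nonneg.2 (by exact_mod_cast hmh)
  have herr : |q * (α - a / q) * (h - m)| ≤ 1 :=
    calc |q * (α - a / q) * (h - m)| = q * |α - a / q| * (h - m) := by
          rw [abs_mul, abs_mul, abs_of_pos hq', abs_of_nonneg hmh']
      _ ≤ q * (1 / (q : ℝ) ^ 2) * q := by gcongr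
      _ = 1 := by field_simp
  rw [hsplit, distNearestInt, ← abs_of_pos hq', ← abs_mul, abs_of_pos hq']
  exact (abs_sub _ _).trans (by linarith)

lemma injOn_sub_mul_round (hcop : Int.gcd a q = 1) (m : ℕ) :
    Set.InjOn (fun h : ℕ => a * h - q * round (α * h)) (Ico m (m + q)) := by
  intro h₁ h₁m h₂ h₂m heq
  simp only [coe_Ico, Set.mem_Ico] at h₁m h₂m
  have hdvd : (q : ℤ) ∣ a * ((h₁ : ℤ) - h₂) :=
    ⟨round (α * h₁) - round (α * h₂), by linear_combination heq⟩
  have hcop' : IsCoprime (q : ℤ) a := by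
    rw [Int.isCoprime_iff_gcd_eq_one, Int.gcd_comm]
    exact hcop
  have := Int.eq_zero_of_abs_lt_dvd (hcop'.dvd_of_dvd_mul_left hdvd)
    (abs_sub_lt_iff.2 ⟨by omega, by omega⟩)
  omega

lemma sum_minInv2_le_of_subset_Ico (hq : 0 < q) {y : ℝ} (hy : 0 < y)
    (hα : |α - a / q| ≤ 1 / (q : ℝ) ^ 2) (hcop : Int.gcd a q = 1) {S : Finset ℕ} {m : ℕ}
    (hS : S ⊆ Ico m (m + q)) :
    ∑ h ∈ S, minInv2 y (α * h) ≤ 4 * y + 4 * q * Real.log (1 + y) := by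
  set z : ℕ → ℤ := fun h => a * h - q * round (α * h)
  set c : ℝ := (a - q * α) * m
  set ψ : ℕ → ℝ := fun k => if k < 2 then y else min y (q / (k - 1))
  have hq' : (0 : ℝ) < q := by exact_mod_cast hq
  have hdist : ∀ h ∈ S, |(z h : ℝ) - c| ≤ q * distNearestInt (α * h) + 1 := fun h hh => by
    have := mem_Ico.1 (hS hh)
    exact abs_sub_mul_round_sub_le hq hα this.1 this.2.le
  have hpoint : ∀ h ∈ S, minInv2 y (α * h) ≤ ψ ⌊|(z h : ℝ) - c|⌋₊ := by
    intro h hh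
    set k := ⌊|(z h : ℝ) - c|⌋₊
    by_cases hk : k < 2
    · exact (minInv2_le y _).trans_eq (if_pos hk).symm
    have hk' : (1 : ℝ) < k := by exact_mod_cast (not_lt.1 hk)
    have hδ : ((k : ℝ) - 1) / q ≤ distNearestInt (α * h) := by
      rw [div_le_iff₀' hq']
      linarith [Nat.floor_le (abs_nonneg ((z h : ℝ) - c)), hdist h hh]
    refine (minInv2_le_min_inv (div_pos (by linarith) hq') hδ).trans_eq ?_
    rw [inv_div]
    exact (if_neg hk).symm
  have hN : ∀ h ∈ S, ⌊|(z h : ℝ) - c|⌋₊ < q + 2 := by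
    intro h hh
    rw [Nat.floor_lt (abs_nonneg _)]
    have : q * distNearestInt (α * h) ≤ q * (1 / 2) := by
      gcongr
      exact abs_sub_round _
    push_cast
    linarith [hdist h hh]
  have hψ : ∀ k, 0 ≤ ψ k := fun k => by
    simp only [ψ]
    split_ifs with hk
    · exact hy.le
    · have : (2 : ℝ) ≤ k := by exact_mod_cast not_lt.1 hk
      exact le_min hy.le (div_nonneg hq'.le (by linarith))
  have hψsum : ∑ k ∈ range (q + 2), ψ k = 2 * y + ∑ k ∈ range q, min y (q / (k + 1)) := by
    rw [sum_range_succ', sum_range_succ']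
    simp [ψ]
    ring
  calc ∑ h ∈ S, minInv2 y (α * h) ≤ ∑ h ∈ S, ψ ⌊|(z h : ℝ) - c|⌋₊ := sum_le_sum hpoint
    _ ≤ 2 * ∑ k ∈ range (q + 2), ψ k :=
        sum_natFloor_abs_sub_le ((injOn_sub_mul_round hcop m).mono hS) c hψ hN
    _ ≤ 2 * (2 * y + 2 * q * Real.log (1 + q * y / q)) := by
        rw [hψsum]
        gcongr
        exact sum_range_min_div_le_log hy hq' q
    _ = 4 * y + 4 * q * Real.log (1 + y) := by
        rw [mul_div_cancel_left₀ _ hq'.ne']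
        ring

lemma sum_minInv2_le (hq : 0 < q) {y : ℝ} (hy : 0 < y)
    (hα : |α - a / q| ≤ 1 / (q : ℝ) ^ 2) (hcop : Int.gcd a q = 1) (X : ℕ) :
    ∑ h ∈ Icc 1 X, minInv2 y (α * h) ≤ ((X : ℝ) / q + 1) * (4 * y + 4 * q * Real.log (1 + y)) := by
  have hblocks : ∀ h ∈ Icc 1 X, h / q ∈ range (X / q + 1) := fun h hh =>
    mem_range.2 (Nat.lt_succ_of_le (Nat.div_le_div_right (mem_Icc.1 hh).2))
  rw [← sum_fiberwise_of_maps_to hblocks]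
  calc ∑ b ∈ range (X / q + 1), ∑ h ∈ Icc 1 X with h / q = b, minInv2 y (α * h)
      ≤ ∑ b ∈ range (X / q + 1), (4 * y + 4 * q * Real.log (1 + y)) := by
        gcongr with b
        refine sum_minInv2_le_of_subset_Ico hq hy hα hcop (m := b * q) fun h hh => ?_
        rw [mem_filter] at hh
        rw [mem_Ico, ← hh.2]
        exact ⟨Nat.div_mul_le_self h q, by have := Nat.lt_div_mul_add (a := h) hq; linarith⟩
    _ ≤ ((X : ℝ) / q + 1) * (4 * y + 4 * q * Real.log (1 + y)) := by
        rw [sum_const, card_range, nsmul_eq_mul]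
        gcongr
        · have : 0 ≤ Real.log (1 + y) := Real.log_nonneg (by linarith)
          positivity
        push_cast
        gcongr
        exact Nat.cast_div_le

end Diophantine

theorem sq_sum_tau_mul_minInv2_le {n q : ℕ} (hn : n ≠ 0) (hq : 0 < q) {y α : ℝ} (hy : 0 < y)
    {a : ℤ} (hα : |α - a / q| ≤ 1 / (q : ℝ) ^ 2) (hcop : Int.gcd a q = 1) (X : ℕ) :
    (∑ h ∈ Icc 1 X, (tau n h : ℝ) * minInv2 y (α * h)) ^ 2 ≤
      (1 + Real.log X) ^ (n ^ 2 - 1) *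
        (X * y * ((X : ℝ) / q + 1) * (4 * y + 4 * q * Real.log (1 + y))) := by
  have htau : ∑ h ∈ Icc 1 X, (tau n h : ℝ) ^ 2 ≤ X * (1 + Real.log X) ^ (n ^ 2 - 1) := by
    calc ∑ h ∈ Icc 1 X, (tau n h : ℝ) ^ 2 ≤ ∑ h ∈ Icc 1 X, (tau (n ^ 2 - 1 + 1) h : ℝ) := by
          gcongr with h
          rw [Nat.sub_add_cancel (Nat.one_le_iff_ne_zero.2 (pow_ne_zero 2 hn)), sq, sq]
          exact_mod_cast tau_mul_tau_le n n h
      _ ≤ X * (1 + Real.log X) ^ (n ^ 2 - 1) := sum_tau_succ_le _ X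
  have hmin : ∑ h ∈ Icc 1 X, minInv2 y (α * h) ^ 2 ≤
      y * (((X : ℝ) / q + 1) * (4 * y + 4 * q * Real.log (1 + y))) := by
    calc ∑ h ∈ Icc 1 X, minInv2 y (α * h) ^ 2 ≤ ∑ h ∈ Icc 1 X, y * minInv2 y (α * h) := by
          gcongr with h
          rw [sq]
          exact mul_le_mul_of_nonneg_right (minInv2_le y _) (minInv2_nonneg hy.le _)
      _ ≤ y * (((X : ℝ) / q + 1) * (4 * y + 4 * q * Real.log (1 + y))) := by
          rw [← mul_sum]
          gcongr
          exact sum_minInv2_le hq hy hα hcop X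
  calc (∑ h ∈ Icc 1 X, (tau n h : ℝ) * minInv2 y (α * h)) ^ 2
      ≤ (∑ h ∈ Icc 1 X, (tau n h : ℝ) ^ 2) * ∑ h ∈ Icc 1 X, minInv2 y (α * h) ^ 2 :=
        sum_mul_sq_le_sq_mul_sq _ _ _
    _ ≤ (X * (1 + Real.log X) ^ (n ^ 2 - 1)) *
          (y * (((X : ℝ) / q + 1) * (4 * y + 4 * q * Real.log (1 + y)))) := by
        gcongr
    _ = _ := by ring

lemma mul_div_add_one_mul_le {c P y q ℓ L : ℝ} (hc : 1 ≤ c) (hP : 0 < P) (hy : 0 < y)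
    (hq : 0 < q) (hℓL : ℓ ≤ L) (hL : 1 ≤ L) :
    c * P * y * (c * P / q + 1) * (4 * y + 4 * q * ℓ) ≤
      4 * c ^ 2 * (P * y) ^ 2 * (1 / q + 1 / P + 1 / y + q / (P * y)) * L := by
  have hcL : 1 ≤ c * L := one_le_mul_of_one_le_of_one_le hc hL
  have h₁ : c * (P * y / q) ≤ c * L * (P * y / q) := by
    gcongr
    exact le_mul_of_one_le_right (by linarith) hL
  have h₂ : c * ℓ * P ≤ c * L * P := by gcongr
  have h₃ : y ≤ c * L * y := le_mul_of_one_le_left hy.le hcL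
  have h₄ : ℓ * q ≤ c * L * q := by
    gcongr
    exact hℓL.trans (le_mul_of_one_le_left (by linarith) hc)
  calc c * P * y * (c * P / q + 1) * (4 * y + 4 * q * ℓ)
      = 4 * (c * P * y) * (c * (P * y / q) + c * ℓ * P + y + ℓ * q) := by
        field_simp
        ring
    _ ≤ 4 * (c * P * y) * (c * L * (P * y / q) + c * L * P + c * L * y + c * L * q) :=
        mul_le_mul_of_nonneg_left (by linarith) (by positivity)
    _ = _ := by
        field_simp
        ring

lemma one_add_log_pow_mul_le {c P y q : ℝ} (hc : 1 ≤ c) (hy : 2 ≤ y) (hyP : y ≤ P) (hq : 0 < q)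
    (M : ℕ) :
    (1 + Real.log (c * P)) ^ M * (c * P * y * (c * P / q + 1) * (4 * y + 4 * q * Real.log (1 + y)))
      ≤ 4 * c ^ 2 * (2 + Real.log c) ^ M * (P * y) ^ 2 * (1 / q + 1 / P + 1 / y + q / (P * y)) *
        Real.log (P * y) ^ (M + 1) := by
  have hy0 : 0 < y := by linarith
  have hP0 : 0 < P := by linarith
  set L := Real.log (P * y)
  have hL : 1 ≤ L := by
    rw [Real.le_log_iff_exp_le (by positivity)]
    nlinarith [Real.exp_one_lt_three]
  have hlogP : Real.log P ≤ L := Real.log_le_log (by positivity) (by nlinarith)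
  have hlogy : Real.log (1 + y) ≤ L := Real.log_le_log (by positivity) (by nlinarith)
  have hlogc : 0 ≤ Real.log c := Real.log_nonneg hc
  have hlogcP : 1 + Real.log (c * P) ≤ (2 + Real.log c) * L := by
    rw [Real.log_mul (by positivity) (by positivity)]
    nlinarith
  calc _ ≤ ((2 + Real.log c) * L) ^ M *
        (4 * c ^ 2 * (P * y) ^ 2 * (1 / q + 1 / P + 1 / y + q / (P * y)) * L) := by
        refine mul_le_mul (pow_le_pow_left₀ ?_ hlogcP _)
          (mul_div_add_one_mul_le hc hP0 hy0 hq hlogy hL)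
          ?_ (pow_nonneg (by positivity) _)
        · linarith [Real.log_nonneg (one_le_mul_of_one_le_of_one_le hc (by linarith : 1 ≤ P))]
        · have : 0 ≤ Real.log (1 + y) := Real.log_nonneg (by linarith)
          positivity
    _ = _ := by
        rw [mul_pow]
        ring

/-- **estimate of `W₄`.** Let `n ≥ 2` be fixed. There is a constant `C`
(depending only on `n`) such that for all positive integers `K, y, q` with `q ≥ 2`,
`y ≥ 2`, and any real `α` with `|α − a/q| ≤ 1/q²`, `gcd(a,q) = 1`, the quantity
`W₄ = ∑_{h ≤ (n−1)! K y^{n−1}} τ_n(h) min(y, 1/(2‖αh‖))` satisfies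
`W₄² ≤ C K² y^{2n} (1/q + 1/(K y^{n−1}) + 1/y + q/(K yⁿ)) (ln(K yⁿ))^{n²}`. -/
theorem W4_sq_le (n : ℕ) (hn : 2 ≤ n) :
    ∃ C : ℝ, 0 < C ∧ ∀ K y q : ℕ, 0 < K → 2 ≤ y → 2 ≤ q →
      ∀ (α : ℝ) (a : ℤ), |α - (a : ℝ) / q| ≤ 1 / (q : ℝ) ^ 2 → Int.gcd a q = 1 →
        (∑ h ∈ Finset.Icc 1 ((n - 1).factorial * K * y ^ (n - 1)),
            (tau n h : ℝ) * minInv2 (y : ℝ) (α * h)) ^ 2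
          ≤ C * (K : ℝ) ^ 2 * (y : ℝ) ^ (2 * n) *
              (1 / (q : ℝ) + 1 / ((K : ℝ) * (y : ℝ) ^ (n - 1)) + 1 / (y : ℝ) +
                (q : ℝ) / ((K : ℝ) * (y : ℝ) ^ n)) *
              (Real.log ((K : ℝ) * (y : ℝ) ^ n)) ^ (n ^ 2) := by
  set c : ℝ := ((n - 1).factorial : ℝ)
  have hc : 1 ≤ c := Nat.one_le_cast.2 (n - 1).factorial_pos
  refine ⟨4 * c ^ 2 * (2 + Real.log c) ^ (n ^ 2 - 1), by positivity, ?_⟩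
  intro K y q hK hy hq α a hα hcop
  have hy' : (2 : ℝ) ≤ y := by exact_mod_cast hy
  set P : ℝ := K * (y : ℝ) ^ (n - 1)
  have hyP : (y : ℝ) ≤ P := (le_self_pow₀ (by linarith) (by omega)).trans
    (le_mul_of_one_le_left (by positivity) (by exact_mod_cast hK))
  have hyn : (K : ℝ) * (y : ℝ) ^ n = P * y := by
    rw [mul_assoc, ← pow_succ, Nat.sub_add_cancel (by omega)]
  have hX : ((((n - 1).factorial * K * y ^ (n - 1) : ℕ)) : ℝ) = c * P := by
    push_cast
    ring
  calc _ ≤ (1 + Real.log (c * P)) ^ (n ^ 2 - 1) *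
        (c * P * y * (c * P / q + 1) * (4 * y + 4 * q * Real.log (1 + y))) := by
        rw [← hX]
        exact sq_sum_tau_mul_minInv2_le (by omega) (by omega) (by positivity) hα hcop _
    _ ≤ _ := one_add_log_pow_mul_le hc hy' hyP (by positivity) _
    _ = _ := by
        rw [Nat.sub_add_cancel (Nat.one_le_pow _ _ (by omega)), ← hyn]
        ring
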